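/- arXiv:2003.10123 — 2 statements merged into one kernel-verified Lean document; each statement's English description precedes it below -/
import Mathlib

section
/- For every square-summable sequence (v_k)_{k≥1} of complex numbers, with c_k = (-1)^k·√2·exp((2k-1)·π²/2) / sinh((2k-1)·π²/2), the function g(x) = Σ_{k≥1} c_k·v_k·exp(-(2k-1)·(π/2)·x) satisfies ∫_0^∞ |g(x)|² dx ≤ 10 · Σ_{k≥1} |v_k|². Moreover, ∫_0^∞ |g(x)|² dx = (1/π) · Σ_{j≥1} Σ_{k≥1} c_j·conj(c_k)·v_j·conj(v_k) / (j + k - 1). -/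
open Real MeasureTheory

/-- The coefficients `c_k = (-1)^k √2 exp((2k-1)π²/2) / sinh((2k-1)π²/2)`, encoded with
`cSeq k` standing for `c_{k+1}`. -/
noncomputable def cSeq (k : ℕ) : ℝ :=
  (-1 : ℝ) ^ (k + 1) * Real.sqrt 2 * Real.exp ((2 * (k : ℝ) + 1) * π ^ 2 / 2) /
    Real.sinh ((2 * (k : ℝ) + 1) * π ^ 2 / 2)

open Set ComplexConjugate

/-!
Expanding `|g|²` as a double series, the product of the `j`-th and `k`-th exponentials
integrates to `1 / (π (j + k + 1))`, so `∫₀^∞ |g|²` is `1/π` times the Hilbert form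
`Σ a_j ā_k / (j + k + 1)` with `a_k = c_k v_k`; absolute convergence of that form justifies
exchanging sum and integral. Hilbert's inequality, proved by the Schur test with weights
`(k + 1/2)^(-1/2)` and a comparison of the row sums with the integral of
`d/du (2/√a · arctan (√u / √a)) = 1 / ((a + u) √u)`, bounds the form by `π Σ |a_k|²`,
and `|c_k|² ≤ 10` gives the estimate.
-/

lemma cSeq_sq_le_ten (k : ℕ) : cSeq k ^ 2 ≤ 10 := by
  set t := (2 * (k : ℝ) + 1) * π ^ 2 / 2
  -- `t ≥ 9/2` forces `e^(-2t) ≤ 1/10`, so `sinh t ≥ (9/20) e^t` and `c² ≤ 800/81`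
  have ht : 9 / 2 ≤ t := by
    have hpi : 9 ≤ π ^ 2 := by nlinarith [pi_gt_three]
    have : (0 : ℝ) ≤ k := k.cast_nonneg
    simp only [t]
    nlinarith
  have hexp : 10 * exp (-t) ≤ exp t := by
    have h := add_one_le_exp (2 * t)
    rw [show exp t = exp (2 * t) * exp (-t) by rw [← exp_add]; ring_nf]
    nlinarith [exp_pos (-t)]
  have hsinh : 9 / 20 * exp t ≤ sinh t := by rw [sinh_eq]; linarith
  have hc : cSeq k ^ 2 = 2 * exp t ^ 2 / sinh t ^ 2 := by
    rw [cSeq, div_pow, mul_pow, mul_pow, ← pow_mul, (Even.mul_left even_two _).neg_one_pow,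
      sq_sqrt zero_le_two, one_mul]
  rw [hc, div_le_iff₀ (by positivity)]
  nlinarith [mul_le_mul hsinh hsinh (by positivity) (by linarith [exp_pos t])]

lemma Real.div_one_add_sq_le_arctan {s : ℝ} (hs : 0 ≤ s) : s / (1 + s ^ 2) ≤ arctan s := by
  have h := sin_le (mul_nonneg zero_le_two (arctan_nonneg.2 hs))
  rw [sin_two_mul, sin_arctan, cos_arctan] at h
  have : 0 < √(1 + s ^ 2) := by positivity
  have h2 : √(1 + s ^ 2) ^ 2 = 1 + s ^ 2 := sq_sqrt (by positivity)
  rw [← h2]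
  field_simp at h ⊢
  linarith

lemma hasDerivAt_arctan_sqrt_div_sqrt {a u : ℝ} (ha : 0 < a) (hu : 0 < u) :
    HasDerivAt (fun u => 2 / √a * arctan (√u / √a)) (1 / ((a + u) * √u)) u := by
  have hsq : HasDerivAt (fun u => √u) (1 / (2 * √u)) u := by
    simpa using (hasDerivAt_id u).sqrt hu.ne'
  refine ((hsq.div_const √a).arctan.const_mul _).congr_deriv ?_
  have : 0 < √a := sqrt_pos.2 ha
  have : 0 < √u := sqrt_pos.2 hu
  rw [div_pow, sq_sqrt ha.le, sq_sqrt hu.le]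
  field_simp
  rw [sq_sqrt ha.le]

lemma sum_range_inv_mul_sqrt_le {a : ℝ} (ha : 0 < a) (n : ℕ) :
    ∑ k ∈ Finset.range n, 1 / ((a + (k + 1 / 2)) * √(k + 1 / 2)) ≤ π / √a := by
  set g : ℝ → ℝ := fun u => 1 / ((a + u) * √u)
  set G : ℝ → ℝ := fun u => 2 / √a * arctan (√u / √a)
  rcases n with _ | m
  · simp only [Finset.range_zero, Finset.sum_empty]
    positivity
  have hanti : AntitoneOn g (Icc (1 / 2) (1 / 2 + m)) := by
    intro u hu w hw huw
    have : 0 < u := by linarith [hu.1]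
    have : 0 < w := by linarith [hw.1]
    dsimp only [g]
    gcongr
  have hint : ∫ u in (1 / 2)..(1 / 2 + m), g u = G (1 / 2 + m) - G (1 / 2) := by
    refine intervalIntegral.integral_eq_sub_of_hasDerivAt (fun u hu => ?_) ?_
    · rw [uIcc_of_le (by simp)] at hu
      exact hasDerivAt_arctan_sqrt_div_sqrt ha (by linarith [hu.1])
    · exact AntitoneOn.intervalIntegrable (by rwa [uIcc_of_le (by simp)])
  -- the arctan lower bound is sharp for the first term exactly at `u = 1/2`
  have hfirst : g (1 / 2) ≤ G (1 / 2) := by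
    have h := div_one_add_sq_le_arctan (s := √(1 / 2) / √a) (by positivity)
    have : 0 < √a := sqrt_pos.2 ha
    have hhalf : √(1 / 2) ^ 2 = 1 / 2 := sq_sqrt (by norm_num)
    calc g (1 / 2) = 2 / √a * ((√(1 / 2) / √a) / (1 + (√(1 / 2) / √a) ^ 2)) := by
          dsimp only [g]
          rw [div_pow, sq_sqrt ha.le]
          field_simp
          rw [sq_sqrt ha.le, hhalf]
          ring
      _ ≤ G (1 / 2) := by dsimp only [G]; gcongr
  have hlast : G (1 / 2 + m) ≤ π / √a := by
    have := arctan_lt_pi_div_two (√(1 / 2 + m) / √a)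
    calc G (1 / 2 + m) ≤ 2 / √a * (π / 2) := by dsimp only [G]; gcongr
      _ = π / √a := by ring
  calc ∑ k ∈ Finset.range (m + 1), 1 / ((a + (k + 1 / 2)) * √(k + 1 / 2))
      = ∑ i ∈ Finset.range m, g (1 / 2 + ↑(i + 1)) + g (1 / 2) := by
        rw [Finset.sum_range_succ']
        push_cast
        simp only [g, add_comm (1 / 2 : ℝ), zero_add]
    _ ≤ (G (1 / 2 + m) - G (1 / 2)) + G (1 / 2) := by
        gcongr
        exact hint ▸ hanti.sum_le_integral
    _ ≤ π / √a := by linarith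

theorem schur_test {ι : Type*} {K : ι → ι → ℝ} {p b : ι → ℝ} {C : ℝ}
    (hK : ∀ i j, 0 ≤ K i j) (hK_symm : ∀ i j, K i j = K j i) (hp : ∀ i, 0 < p i)
    (hrow_summable : ∀ i, Summable fun j => K i j * p j)
    (hrow : ∀ i, ∑' j, K i j * p j ≤ C * p i) (hb : Summable fun i => b i ^ 2) :
    Summable (fun q : ι × ι => K q.1 q.2 * b q.1 * b q.2) ∧
      ∑' q : ι × ι, K q.1 q.2 * b q.1 * b q.2 ≤ C * ∑' i, b i ^ 2 := by
  set F : ι × ι → ℝ := fun q => b q.1 ^ 2 / p q.1 * (K q.1 q.2 * p q.2)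
  have hF_nonneg : 0 ≤ F := fun q => by
    have := hp q.1; have := hp q.2; have := hK q.1 q.2
    positivity
  have hF_row : ∀ i, Summable fun j => F (i, j) := fun i =>
    (hrow_summable i).mul_left (b i ^ 2 / p i)
  have hF_row_le : ∀ i, ∑' j, F (i, j) ≤ C * b i ^ 2 := fun i => by
    have := hp i
    calc ∑' j, b i ^ 2 / p i * (K i j * p j) = b i ^ 2 / p i * ∑' j, K i j * p j := tsum_mul_left
      _ ≤ b i ^ 2 / p i * (C * p i) := by gcongr; exact hrow i
      _ = C * b i ^ 2 := by field_simp
  have hF_rows : Summable fun i => ∑' j, F (i, j) :=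
    (hb.mul_left C).of_nonneg_of_le (fun i => tsum_nonneg fun j => hF_nonneg _) hF_row_le
  have hF : Summable F := (summable_prod_of_nonneg hF_nonneg).2 ⟨hF_row, hF_rows⟩
  have hF_le : ∑' q, F q ≤ C * ∑' i, b i ^ 2 := by
    rw [hF.tsum_prod' hF_row, ← tsum_mul_left]
    exact hF_rows.tsum_le_tsum hF_row_le (hb.mul_left C)
  have hbound : ∀ q : ι × ι, ‖K q.1 q.2 * b q.1 * b q.2‖ ≤ (F q + F q.swap) / 2 := by
    rintro ⟨i, j⟩
    have hi := hp i
    have hj := hp j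
    have amgm : 2 * (|b i| * |b j|) ≤ b i ^ 2 / p i * p j + b j ^ 2 / p j * p i := by
      rw [div_mul_eq_mul_div, div_mul_eq_mul_div, div_add_div _ _ hi.ne' hj.ne',
        le_div_iff₀ (by positivity)]
      have h := sq_nonneg (|b i| * p j - |b j| * p i)
      rw [sub_sq, mul_pow, mul_pow, sq_abs, sq_abs] at h
      linarith
    simp only [F, Prod.swap, norm_mul, Real.norm_eq_abs, abs_of_nonneg (hK i j), hK_symm j i]
    linear_combination mul_le_mul_of_nonneg_left amgm (hK i j) / 2
  have hF_swap : Summable fun q : ι × ι => F q.swap := hF.prod_symm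
  have hdom : Summable fun q : ι × ι => (F q + F q.swap) / 2 := (hF.add hF_swap).div_const 2
  have hsum := Summable.of_norm_bounded hdom hbound
  refine ⟨hsum, ?_⟩
  calc ∑' q : ι × ι, K q.1 q.2 * b q.1 * b q.2 ≤ ∑' q, (F q + F q.swap) / 2 :=
        hsum.tsum_le_tsum (fun q => (le_abs_self _).trans (hbound q)) hdom
    _ = ∑' q, F q := by
        have : ∑' q : ι × ι, F q.swap = ∑' q, F q := (Equiv.prodComm ι ι).tsum_eq F
        rw [tsum_div_const, hF.tsum_add hF_swap, this]
        ring
    _ ≤ C * ∑' i, b i ^ 2 := hF_le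

theorem hilbert_inequality {b : ℕ → ℝ} (hb : Summable fun k => b k ^ 2) :
    Summable (fun q : ℕ × ℕ => b q.1 * b q.2 / (q.1 + q.2 + 1 : ℝ)) ∧
      ∑' q : ℕ × ℕ, b q.1 * b q.2 / (q.1 + q.2 + 1 : ℝ) ≤ π * ∑' k, b k ^ 2 := by
  set K : ℕ → ℕ → ℝ := fun j k => 1 / (j + k + 1)
  set p : ℕ → ℝ := fun k => 1 / √(k + 1 / 2)
  have hrow : ∀ j n, ∑ k ∈ Finset.range n, K j k * p k ≤ π * p j := fun j n => by
    convert sum_range_inv_mul_sqrt_le (a := j + 1 / 2) (by positivity) n using 2 with k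
    · simp only [K, p]
      rw [one_div_mul_one_div]
      congr 2
      ring
    · simp only [p]
      ring
  have hK : ∀ j k, 0 ≤ K j k := fun j k => by positivity
  have hp : ∀ k, 0 < p k := fun k => by positivity
  have hKp : ∀ j k, 0 ≤ K j k * p k := fun j k => mul_nonneg (hK j k) (hp k).le
  have h := schur_test hK (fun j k => by simp only [K, add_comm (j : ℝ)]) hp
    (fun j => summable_of_sum_range_le (hKp j) (hrow j))
    (fun j => Real.tsum_le_of_sum_range_le (hKp j) (hrow j)) hb
  have hK_eq : (fun q : ℕ × ℕ => b q.1 * b q.2 / (q.1 + q.2 + 1 : ℝ)) =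
      fun q => K q.1 q.2 * b q.1 * b q.2 := by
    funext q
    simp only [K]
    ring
  rwa [hK_eq]

lemma summable_norm_mul_exp {s x : ℝ} (hsx : 0 < s * x) {a : ℕ → ℂ}
    (ha : Summable fun k => ‖a k‖ ^ 2) :
    Summable fun k : ℕ => ‖a k * (rexp (-(2 * (k : ℝ) + 1) * s * x) : ℂ)‖ := by
  have he : Summable fun k : ℕ => rexp (-(2 * (k : ℝ) + 1) * s * x) := by
    convert Real.summable_exp_nat_mul_of_ge (neg_lt_zero.2 hsx)
      (f := fun k : ℕ => 2 * (k : ℝ) + 1) (fun k => by linarith [k.cast_nonneg (α := ℝ)])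
      using 3 with k
    ring
  refine (ha.add he).of_nonneg_of_le (fun _ => norm_nonneg _) fun k => ?_
  have he1 : rexp (-(2 * (k : ℝ) + 1) * s * x) ≤ 1 := by
    rw [exp_le_one_iff, mul_assoc]
    nlinarith [k.cast_nonneg (α := ℝ)]
  rw [norm_mul, Complex.norm_real, norm_of_nonneg (exp_pos _).le]
  nlinarith [sq_nonneg (‖a k‖ - rexp (-(2 * (k : ℝ) + 1) * s * x)), norm_nonneg (a k),
    exp_pos (-(2 * (k : ℝ) + 1) * s * x)]

lemma ofReal_norm_tsum_sq {ι : Type*} {u : ι → ℂ} (hu : Summable fun i => ‖u i‖) :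
    ((‖∑' i, u i‖ ^ 2 : ℝ) : ℂ) = ∑' q : ι × ι, u q.1 * conj (u q.2) := by
  rw [Complex.ofReal_pow, ← Complex.mul_conj', Complex.conj_tsum]
  exact tsum_mul_tsum_of_summable_norm hu (by simpa only [RCLike.norm_conj] using hu)

lemma summable_norm_mul_conj_div_and_tsum_le {s : ℝ} (hs : 0 < s) {a : ℕ → ℂ}
    (ha : Summable fun k => ‖a k‖ ^ 2) :
    Summable (fun q : ℕ × ℕ => ‖a q.1 * conj (a q.2) / ((2 * s * (q.1 + q.2 + 1) : ℝ) : ℂ)‖) ∧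
      ∑' q : ℕ × ℕ, ‖a q.1 * conj (a q.2) / ((2 * s * (q.1 + q.2 + 1) : ℝ) : ℂ)‖ ≤
        π / (2 * s) * ∑' k, ‖a k‖ ^ 2 := by
  have heq : (fun q : ℕ × ℕ => ‖a q.1 * conj (a q.2) / ((2 * s * (q.1 + q.2 + 1) : ℝ) : ℂ)‖) =
      fun q => (2 * s)⁻¹ * (‖a q.1‖ * ‖a q.2‖ / (q.1 + q.2 + 1 : ℝ)) := by
    funext q
    rw [norm_div, norm_mul, RCLike.norm_conj, Complex.norm_real,
      norm_of_nonneg (by positivity)]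
    field_simp
  obtain ⟨hsum, hle⟩ := hilbert_inequality ha
  rw [heq, tsum_mul_left]
  refine ⟨hsum.mul_left _, ?_⟩
  calc (2 * s)⁻¹ * ∑' q : ℕ × ℕ, ‖a q.1‖ * ‖a q.2‖ / (q.1 + q.2 + 1 : ℝ)
      ≤ (2 * s)⁻¹ * (π * ∑' k, ‖a k‖ ^ 2) := by gcongr
    _ = π / (2 * s) * ∑' k, ‖a k‖ ^ 2 := by ring

theorem ofReal_integral_norm_sq_tsum_exp {s : ℝ} (hs : 0 < s) {a : ℕ → ℂ}
    (ha : Summable fun k => ‖a k‖ ^ 2) :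
    ((∫ x in Ioi (0 : ℝ), ‖∑' k : ℕ, a k * (rexp (-(2 * (k : ℝ) + 1) * s * x) : ℂ)‖ ^ 2 : ℝ) : ℂ) =
      ∑' q : ℕ × ℕ, a q.1 * conj (a q.2) / ((2 * s * (q.1 + q.2 + 1) : ℝ) : ℂ) := by
  set rate : ℕ × ℕ → ℝ := fun q => 2 * s * (q.1 + q.2 + 1)
  set f : ℕ × ℕ → ℝ → ℂ := fun q x => a q.1 * conj (a q.2) * (rexp (-rate q * x) : ℂ)
  have hrate : ∀ q, 0 < rate q := fun q => by positivity
  have hexp : ∀ q, ∫ x in Ioi (0 : ℝ), rexp (-rate q * x) = (rate q)⁻¹ := fun q => by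
    rw [integral_exp_mul_Ioi (neg_lt_zero.2 (hrate q)), mul_zero, exp_zero, div_neg, neg_div,
      neg_neg, one_div]
  have hf_int : ∀ q, Integrable (f q) (volume.restrict (Ioi 0)) := fun q =>
    (exp_neg_integrableOn_Ioi 0 (hrate q)).ofReal.const_mul _
  have hf_integral : ∀ q, ∫ x in Ioi (0 : ℝ), f q x = a q.1 * conj (a q.2) / (rate q : ℂ) :=
    fun q => by
      rw [integral_const_mul, integral_complex_ofReal, hexp, Complex.ofReal_inv, div_eq_mul_inv]
  have hf_norm : ∀ q, ∫ x in Ioi (0 : ℝ), ‖f q x‖ = ‖a q.1 * conj (a q.2) / (rate q : ℂ)‖ :=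
    fun q => by
      simp only [f, norm_mul, norm_div, Complex.norm_real, norm_of_nonneg (exp_pos _).le,
        norm_of_nonneg (hrate q).le]
      rw [integral_const_mul, hexp, div_eq_mul_inv]
  have hpoint : ∀ x ∈ Ioi (0 : ℝ),
      ((‖∑' k : ℕ, a k * (rexp (-(2 * (k : ℝ) + 1) * s * x) : ℂ)‖ ^ 2 : ℝ) : ℂ) =
        ∑' q, f q x := fun x hx => by
    rw [ofReal_norm_tsum_sq (summable_norm_mul_exp (mul_pos hs hx) ha)]
    refine tsum_congr fun q => ?_
    simp only [f, rate, map_mul, Complex.conj_ofReal]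
    rw [mul_mul_mul_comm, ← Complex.ofReal_mul, ← exp_add]
    ring_nf
  calc _ = ∫ x in Ioi (0 : ℝ),
        ((‖∑' k : ℕ, a k * (rexp (-(2 * (k : ℝ) + 1) * s * x) : ℂ)‖ ^ 2 : ℝ) : ℂ) :=
        integral_complex_ofReal.symm
    _ = ∫ x in Ioi (0 : ℝ), ∑' q, f q x := setIntegral_congr_fun measurableSet_Ioi hpoint
    _ = ∑' q, ∫ x in Ioi (0 : ℝ), f q x := by
        refine (integral_tsum_of_summable_integral_norm hf_int ?_).symm
        simpa only [hf_norm] using (summable_norm_mul_conj_div_and_tsum_le hs ha).1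
    _ = _ := tsum_congr hf_integral

theorem integral_norm_sq_tsum_exp_le {s : ℝ} (hs : 0 < s) {a : ℕ → ℂ}
    (ha : Summable fun k => ‖a k‖ ^ 2) :
    ∫ x in Ioi (0 : ℝ), ‖∑' k : ℕ, a k * (rexp (-(2 * (k : ℝ) + 1) * s * x) : ℂ)‖ ^ 2 ≤
      π / (2 * s) * ∑' k, ‖a k‖ ^ 2 := by
  obtain ⟨hsum, hle⟩ := summable_norm_mul_conj_div_and_tsum_le hs ha
  have hnonneg : 0 ≤ ∫ x in Ioi (0 : ℝ),
      ‖∑' k : ℕ, a k * (rexp (-(2 * (k : ℝ) + 1) * s * x) : ℂ)‖ ^ 2 :=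
    setIntegral_nonneg measurableSet_Ioi fun _ _ => by positivity
  rw [← norm_of_nonneg hnonneg, ← Complex.norm_real, ofReal_integral_norm_sq_tsum_exp hs ha]
  exact (norm_tsum_le_tsum_norm hsum).trans hle

/-- The sequence `(v_k)_{k≥1}` is encoded as `v : ℕ → ℂ` with `v k` standing for `v_{k+1}`,
so the denominator `j + k - 1` becomes `j + k + 1`. -/
theorem g_integral_estimate_and_formula (v : ℕ → ℂ)
    (hv : Summable fun k : ℕ => ‖v k‖ ^ 2) :
    (∫ x in Set.Ioi (0:ℝ),
        ‖∑' k : ℕ, (cSeq k : ℂ) * v k *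
          (Real.exp (-(2 * (k : ℝ) + 1) * (π / 2) * x) : ℝ)‖ ^ 2)
      ≤ 10 * ∑' k : ℕ, ‖v k‖ ^ 2
    ∧ ((∫ x in Set.Ioi (0:ℝ),
        ‖∑' k : ℕ, (cSeq k : ℂ) * v k *
          (Real.exp (-(2 * (k : ℝ) + 1) * (π / 2) * x) : ℝ)‖ ^ 2 : ℝ) : ℂ)
      = (1 / (π : ℂ)) *
          ∑' p : ℕ × ℕ, (cSeq p.1 : ℂ) * (starRingEnd ℂ) ((cSeq p.2 : ℝ) : ℂ) *
            v p.1 * (starRingEnd ℂ) (v p.2) / ((p.1 : ℂ) + (p.2 : ℂ) + 1) := by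
  set a : ℕ → ℂ := fun k => (cSeq k : ℂ) * v k
  have ha_le : ∀ k, ‖a k‖ ^ 2 ≤ 10 * ‖v k‖ ^ 2 := fun k => by
    rw [norm_mul, Complex.norm_real, mul_pow, Real.norm_eq_abs, sq_abs]
    exact mul_le_mul_of_nonneg_right (cSeq_sq_le_ten k) (by positivity)
  have ha : Summable fun k => ‖a k‖ ^ 2 :=
    (hv.mul_left 10).of_nonneg_of_le (fun _ => by positivity) ha_le
  constructor
  · calc _ ≤ π / (2 * (π / 2)) * ∑' k, ‖a k‖ ^ 2 :=
          integral_norm_sq_tsum_exp_le pi_div_two_pos ha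
      _ = ∑' k, ‖a k‖ ^ 2 := by rw [mul_div_cancel₀ π two_ne_zero, div_self pi_ne_zero, one_mul]
      _ ≤ ∑' k, 10 * ‖v k‖ ^ 2 := ha.tsum_le_tsum ha_le (hv.mul_left 10)
      _ = 10 * ∑' k, ‖v k‖ ^ 2 := tsum_mul_left
  · rw [ofReal_integral_norm_sq_tsum_exp pi_div_two_pos ha, ← tsum_mul_left]
    refine tsum_congr fun q => ?_
    simp only [a, map_mul]
    push_cast
    field_simp
end

section
/- Let μ_k = √(k·tanh(k)) for every integer k ≥ 1. Then for all k ≥ 1, 0 ≤ √k - μ_k ≤ 2·√k·exp(-2k). -/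
/-! Since `1 - tanh x = 2 / (e^{2x} + 1) < 2 e^{-2x}` and `0 ≤ tanh x ≤ 1` for `x ≥ 0`, and
`√(a t) = √a √t ≥ √a t` for `t ∈ [0, 1]`, the gap `√k - √(k tanh k)` lies between `0` and
`√k (1 - tanh k) ≤ 2 √k e^{-2k}`. -/

open Real

noncomputable def muWW (k : ℕ) : ℝ :=
  Real.sqrt ((k : ℝ) * Real.tanh (k : ℝ))

namespace Real

lemma tanh_nonneg {x : ℝ} (hx : 0 ≤ x) : 0 ≤ tanh x := by
  rw [tanh_eq_sinh_div_cosh]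
  exact div_nonneg (sinh_nonneg_iff.mpr hx) (cosh_pos x).le

lemma one_sub_tanh_eq (x : ℝ) : 1 - tanh x = 2 / (exp (2 * x) + 1) := by
  have hexp : exp (2 * x) = exp x * exp x := by rw [← exp_add, two_mul]
  rw [tanh_eq, exp_neg, hexp]
  field_simp
  ring

lemma one_sub_tanh_le (x : ℝ) : 1 - tanh x ≤ 2 * exp (-2 * x) := by
  rw [one_sub_tanh_eq, neg_mul, exp_neg, ← div_eq_mul_inv]
  gcongr
  linarith

lemma sqrt_mul_le_sqrt {a t : ℝ} (ha : 0 ≤ a) (ht : t ≤ 1) : √(a * t) ≤ √a :=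
  sqrt_le_sqrt (mul_le_of_le_one_right ha ht)

lemma sqrt_sub_sqrt_mul_le {a t : ℝ} (ht₀ : 0 ≤ t) (ht₁ : t ≤ 1) :
    √a - √(a * t) ≤ √a * (1 - t) := by
  rw [sqrt_mul' a ht₀, ← mul_one_sub]
  gcongr
  exact le_sqrt_self_iff.mpr ht₁

end Real

theorem muWW_close_to_sqrt_general (k : ℕ) :
    0 ≤ Real.sqrt (k : ℝ) - muWW k
    ∧ Real.sqrt (k : ℝ) - muWW k ≤ 2 * Real.sqrt (k : ℝ) * Real.exp (-2 * (k : ℝ)) := by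
  have htanh₀ : 0 ≤ tanh (k : ℝ) := tanh_nonneg k.cast_nonneg
  have htanh₁ : tanh (k : ℝ) ≤ 1 := (tanh_lt_one _).le
  refine ⟨sub_nonneg.mpr (sqrt_mul_le_sqrt k.cast_nonneg htanh₁), ?_⟩
  calc √(k : ℝ) - muWW k ≤ √k * (1 - tanh k) := sqrt_sub_sqrt_mul_le htanh₀ htanh₁
    _ ≤ √k * (2 * exp (-2 * k)) := by gcongr; exact one_sub_tanh_le _
    _ = 2 * √k * exp (-2 * k) := by ring

/-- For all `k ≥ 1`, `0 ≤ √k - μ_k ≤ 2 √k e^{-2k}`: `μ_k ≈ √k` with exponentially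
small error. -/
theorem muWW_close_to_sqrt (k : ℕ) (hk : 1 ≤ k) :
    0 ≤ Real.sqrt (k : ℝ) - muWW k
    ∧ Real.sqrt (k : ℝ) - muWW k ≤ 2 * Real.sqrt (k : ℝ) * Real.exp (-2 * (k : ℝ)) :=
  muWW_close_to_sqrt_general k
end
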